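/- arXiv:1701.02168 — 2 statements merged into one kernel-verified Lean document; each statement's English description precedes it below -/
import Mathlib

section
/- Let A be a parity automaton with costs, and let (ρ_j^1)_{j∈ℕ} and (ρ_j^2)_{j∈ℕ} be sequences of non-empty finite runs of A such that for every j the runs ρ_j^1 and ρ_j^2 have the same type, the last state of ρ_j^i equals the first state of ρ_{j+1}^i for every j and i ∈ {1,2}, and sup_j |ρ_j^1| < ∞ and sup_j |ρ_j^2| < ∞. Then the infinite run ρ_0^1 ρ_1^1 ρ_2^1 ⋯ is accepting if, and only if, the infinite run ρ_0^2 ρ_1^2 ρ_2^2 ⋯ is accepting. -/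
attribute [local instance] Classical.propDecidable

noncomputable section

/-- A parity automaton with costs `(Q, A, qI, δ, Ω, Cst)`.
`Cst q a = true` means that the transition `(q, a, δ q a)` is an increment-transition,
`Cst q a = false` means it is an `ε`-transition. -/
structure PACost (Q : Type) (A : Type) where
  qI : Q
  δ : Q → A → Q
  Ω : Q → ℕ
  Cst : Q → A → Bool

namespace PACost

variable {Q A : Type}

/-- The state reached after processing the first `n` letters of `w` starting in `q0`. -/
def stateAt (M : PACost Q A) (q0 : Q) (w : ℕ → A) : ℕ → Q
  | 0 => q0
  | n + 1 => M.δ (stateAt M q0 w n) (w n)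

/-- The cost (number of increment-transitions) of the run infix between positions `m` and `n`. -/
def segCost (M : PACost Q A) (q0 : Q) (w : ℕ → A) (m n : ℕ) : ℕ :=
  ((Finset.Ico m n).filter fun j => M.Cst (stateAt M q0 w j) (w j) = true).card

/-- `Ans c`: the set of even colors of `M` that are larger than `c`. -/
def Ans (M : PACost Q A) (c : ℕ) : Set ℕ :=
  { c' | (∃ q, M.Ω q = c') ∧ c < c' ∧ Even c' }

/-- The cost-of-response at position `n` of the run of `M` on `w` starting in `q0`. -/
def Cor (M : PACost Q A) (q0 : Q) (w : ℕ → A) (n : ℕ) : ℕ∞ :=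
  if Even (M.Ω (stateAt M q0 w n)) then 0
  else
    sInf { c : ℕ∞ | ∃ n', n < n' ∧
      M.Ω (stateAt M q0 w n') ∈ M.Ans (M.Ω (stateAt M q0 w n)) ∧
      c = (segCost M q0 w n n' : ℕ∞) }

/-- The run of `M` on `w` starting in `q0` satisfies the parity condition with costs. -/
def Accepting (M : PACost Q A) (q0 : Q) (w : ℕ → A) : Prop :=
  Filter.limsup (fun n => Cor M q0 w n) Filter.atTop < ⊤

/-- The language of `M`. -/
def Lang (M : PACost Q A) : Set (ℕ → A) := { w | Accepting M M.qI w }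

/-- `M` is a finitary Büchi automaton: every transition is an increment-transition and
all colors are `1` or `2`. -/
def FinBuchi (M : PACost Q A) : Prop :=
  (∀ q a, M.Cst q a = true) ∧ ∀ q, M.Ω q = 1 ∨ M.Ω q = 2

end PACost

/-- The finite segment `w m, w (m+1), …, w (n-1)` of an infinite word `w`. -/
def seg {A : Type} (w : ℕ → A) (m n : ℕ) : List A :=
  (List.range (n - m)).map fun i => w (m + i)

namespace PACost

/-- Types of runs: `(first state, last state, max even color, max unanswered odd color,
increment occurred)`. -/
abbrev RType (Q : Type) := Q × Q × WithBot ℕ × WithBot ℕ × Bool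

variable {Q A : Type}

/-- The type of the non-empty finite run of `M` starting in `q` processing `l`. -/
def runType (M : PACost Q A) (q : Q) (l : List A) : RType Q :=
  let sts := List.scanl M.δ q l
  let st : ℕ → Q := fun j => sts.getD j q
  ( q,
    l.foldl M.δ q,
    ((Finset.range sts.length).filter fun j => Even (M.Ω (st j))).sup
      (fun j => (M.Ω (st j) : WithBot ℕ)),
    ((Finset.range sts.length).filter fun j =>
        Odd (M.Ω (st j)) ∧ ∀ j' < sts.length, j < j' →
          ¬(Even (M.Ω (st j')) ∧ M.Ω (st j) < M.Ω (st j'))).sup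
      (fun j => (M.Ω (st j) : WithBot ℕ)),
    (sts.zip l).any fun p => M.Cst p.1 p.2 )

/-- The type of the empty run prefix starting in `q`. -/
def InitT (M : PACost Q A) (q : Q) : RType Q :=
  ( q, q,
    if Even (M.Ω q) then (M.Ω q : WithBot ℕ) else ⊥,
    if Odd (M.Ω q) then (M.Ω q : WithBot ℕ) else ⊥,
    false )

/-- The type-update function. -/
def UpdT (M : PACost Q A) (t : RType Q) (a : A) : RType Q :=
  match t with
  | (q0, q1, c0, c1, ℓ) =>
    let q1' := M.δ q1 a
    ( q0, q1',
      if Even (M.Ω q1') then max c0 ((M.Ω q1' : WithBot ℕ)) else c0,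
      if Odd (M.Ω q1') then max c1 ((M.Ω q1' : WithBot ℕ))
      else if ∃ c : ℕ, c1 = (c : WithBot ℕ) ∧ M.Ω q1' ∈ M.Ans c then ⊥
      else c1,
      ℓ || M.Cst q1 a )

end PACost

/-! Cut the run into the blocks `[φ j, φ (j + 1)]`. Acceptance is equivalent to: for some `B`,
eventually the maximal request `c₁` still pending at the end of a block is answered by the even
color `c₀` of a later block, with at most `B` blocks containing an increment strictly in between.
If the costs of response are eventually bounded by `C`, the cheapest answer to the request
realising `c₁` yields such a block with `B = C`; conversely a response then costs at most
`(B + 2) d`, where `d` bounds the block lengths. This criterion only involves the types of the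
blocks. -/

open Filter

namespace PACost

variable {Q A : Type} (M : PACost Q A) (q0 : Q) (w : ℕ → A)

lemma seg_length (m n : ℕ) : (seg w m n).length = n - m := by
  simp [seg]

lemma getElem_seg {m n k : ℕ} (h : k < (seg w m n).length) : (seg w m n)[k] = w (m + k) := by
  simp [seg]

lemma seg_take {m n k : ℕ} (h : m + k ≤ n) : (seg w m n).take k = seg w m (m + k) := by
  rw [seg, seg, ← List.map_take, List.take_range, Nat.add_sub_cancel_left, min_eq_left (by omega)]

lemma seg_succ {m n : ℕ} (h : m ≤ n) : seg w m (n + 1) = seg w m n ++ [w n] := by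
  rw [seg, seg, show n + 1 - m = n - m + 1 by omega, List.range_succ, List.map_append]
  simp [Nat.add_sub_cancel' h]

lemma foldl_seg {m n : ℕ} (h : m ≤ n) :
    (seg w m n).foldl M.δ (M.stateAt q0 w m) = M.stateAt q0 w n := by
  induction n, h using Nat.le_induction with
  | base => simp [seg]
  | succ n h ih => rw [seg_succ w h, List.foldl_append, ih]; rfl

lemma getElem_scanl_seg {m n k : ℕ} (h : m + k ≤ n)
    (hk : k < (List.scanl M.δ (M.stateAt q0 w m) (seg w m n)).length) :
    (List.scanl M.δ (M.stateAt q0 w m) (seg w m n))[k] = M.stateAt q0 w (m + k) := by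
  rw [List.getElem_scanl, seg_take w h, foldl_seg M q0 w (by omega)]

lemma any_zip_scanl_seg {m n : ℕ} (h : m ≤ n) :
    ((List.scanl M.δ (M.stateAt q0 w m) (seg w m n)).zip (seg w m n)).any
      (fun p => M.Cst p.1 p.2) = decide (0 < M.segCost q0 w m n) := by
  rw [Bool.eq_iff_iff, List.any_eq_true, decide_eq_true_iff, segCost, Finset.card_pos]
  simp only [List.mem_iff_getElem, List.length_zip, List.getElem_zip, List.length_scanl,
    seg_length]
  constructor
  · rintro ⟨_, ⟨k, hk, rfl⟩, hcst⟩
    refine ⟨m + k, Finset.mem_filter.2 ⟨Finset.mem_Ico.2 ⟨by omega, by omega⟩, ?_⟩⟩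
    rwa [getElem_scanl_seg M q0 w (by omega), getElem_seg] at hcst
  · rintro ⟨p, hp⟩
    obtain ⟨⟨hmp, hpn⟩, hcst⟩ := Finset.mem_filter.1 hp |>.imp_left Finset.mem_Ico.1
    refine ⟨_, ⟨p - m, by omega, rfl⟩, ?_⟩
    rwa [getElem_scanl_seg M q0 w (by omega), getElem_seg, Nat.add_sub_cancel' hmp]

/-- The color `c₀` of the run infix between positions `m` and `n`. -/
def maxEvenColor (m n : ℕ) : WithBot ℕ :=
  ((Finset.Icc m n).filter fun p => Even (M.Ω (M.stateAt q0 w p))).sup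
    fun p => (M.Ω (M.stateAt q0 w p) : WithBot ℕ)

def Unanswered (n p : ℕ) : Prop :=
  ∀ p', p < p' → p' ≤ n →
    ¬(Even (M.Ω (M.stateAt q0 w p')) ∧ M.Ω (M.stateAt q0 w p) < M.Ω (M.stateAt q0 w p'))

/-- The color `c₁` of the run infix between positions `m` and `n`. -/
def maxPendingColor (m n : ℕ) : WithBot ℕ :=
  ((Finset.Icc m n).filter fun p => Odd (M.Ω (M.stateAt q0 w p)) ∧ M.Unanswered q0 w n p).sup
    fun p => (M.Ω (M.stateAt q0 w p) : WithBot ℕ)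

def infixType (m n : ℕ) : RType Q :=
  (M.stateAt q0 w m, M.stateAt q0 w n, M.maxEvenColor q0 w m n, M.maxPendingColor q0 w m n,
    decide (0 < M.segCost q0 w m n))

lemma sup_filter_Icc_eq_sup_filter_range {β : Type*} [SemilatticeSup β] [OrderBot β]
    (P : ℕ → Prop) [DecidablePred P] (f : ℕ → β) {m n : ℕ} (h : m ≤ n) :
    ((Finset.Icc m n).filter P).sup f =
      ((Finset.range (n - m + 1)).filter fun j => P (m + j)).sup fun j => f (m + j) := by
  have hIcc : Finset.Icc m n = (Finset.range (n - m + 1)).map (addLeftEmbedding m) := by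
    ext p
    simp only [Finset.mem_Icc, Finset.mem_map, Finset.mem_range, addLeftEmbedding_apply]
    exact ⟨fun hp => ⟨p - m, by omega, by omega⟩, by rintro ⟨j, hj, rfl⟩; omega⟩
  rw [hIcc, Finset.filter_map, Finset.sup_map]
  rfl

lemma unanswered_add_iff {m n j : ℕ} :
    M.Unanswered q0 w n (m + j) ↔ ∀ j' < n - m + 1, j < j' →
      ¬(Even (M.Ω (M.stateAt q0 w (m + j'))) ∧
        M.Ω (M.stateAt q0 w (m + j)) < M.Ω (M.stateAt q0 w (m + j'))) := by
  refine ⟨fun h j' hj' hjj' => h _ (by omega) (by omega), fun h p' hjp' hp'n => ?_⟩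
  simpa [Nat.add_sub_cancel' (by omega : m ≤ p')] using h (p' - m) (by omega) (by omega)

theorem runType_seg {m n : ℕ} (h : m ≤ n) :
    M.runType (M.stateAt q0 w m) (seg w m n) = M.infixType q0 w m n := by
  have hlen : (List.scanl M.δ (M.stateAt q0 w m) (seg w m n)).length = n - m + 1 := by
    rw [List.length_scanl, seg_length]
  have hst : ∀ j < n - m + 1, (List.scanl M.δ (M.stateAt q0 w m) (seg w m n)).getD j
      (M.stateAt q0 w m) = M.stateAt q0 w (m + j) := fun j hj => by
      rw [List.getD_eq_getElem _ _ (by omega), getElem_scanl_seg M q0 w (by omega)]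
  simp only [runType, infixType, maxEvenColor, maxPendingColor, hlen, foldl_seg M q0 w h,
    any_zip_scanl_seg M q0 w h, sup_filter_Icc_eq_sup_filter_range _ _ h, unanswered_add_iff,
    Prod.mk.injEq, true_and, and_true]
  constructor <;> refine Finset.sup_congr (Finset.filter_congr fun j hj => ?_) fun j hj => ?_
  all_goals simp_all +contextual only [Finset.mem_filter, Finset.mem_range]

lemma coe_lt_maxEvenColor_iff {c m n : ℕ} :
    (c : WithBot ℕ) < M.maxEvenColor q0 w m n ↔
      ∃ p, m ≤ p ∧ p ≤ n ∧ Even (M.Ω (M.stateAt q0 w p)) ∧ c < M.Ω (M.stateAt q0 w p) := by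
  simp only [maxEvenColor, Finset.lt_sup_iff, Finset.mem_filter, Finset.mem_Icc, Nat.cast_lt,
    and_assoc]

lemma le_maxPendingColor {m n p : ℕ} (hmp : m ≤ p) (hpn : p ≤ n)
    (hodd : Odd (M.Ω (M.stateAt q0 w p))) (hp : M.Unanswered q0 w n p) :
    (M.Ω (M.stateAt q0 w p) : WithBot ℕ) ≤ M.maxPendingColor q0 w m n :=
  Finset.le_sup (f := fun p => (M.Ω (M.stateAt q0 w p) : WithBot ℕ))
    (Finset.mem_filter.2 ⟨Finset.mem_Icc.2 ⟨hmp, hpn⟩, hodd, hp⟩)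

lemma exists_eq_maxPendingColor {m n : ℕ} (h : M.maxPendingColor q0 w m n ≠ ⊥) :
    ∃ p, m ≤ p ∧ p ≤ n ∧ Odd (M.Ω (M.stateAt q0 w p)) ∧ M.Unanswered q0 w n p ∧
      (M.Ω (M.stateAt q0 w p) : WithBot ℕ) = M.maxPendingColor q0 w m n := by
  rw [maxPendingColor, Ne, Finset.sup_eq_bot_iff, not_forall₂] at h
  obtain ⟨p₀, hp₀, -⟩ := h
  rw [maxPendingColor]
  obtain ⟨p, hp, hsup⟩ := Finset.exists_mem_eq_sup _ ⟨p₀, hp₀⟩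
    fun p => (M.Ω (M.stateAt q0 w p) : WithBot ℕ)
  obtain ⟨hpI, hodd, hunans⟩ := Finset.mem_filter.1 hp
  exact ⟨p, (Finset.mem_Icc.1 hpI).1, (Finset.mem_Icc.1 hpI).2, hodd, hunans, hsup.symm⟩

lemma segCost_le_sub (m n : ℕ) : M.segCost q0 w m n ≤ n - m :=
  (Finset.card_filter_le _ _).trans (Nat.card_Ico m n).le

lemma segCost_mono {m m' n n' : ℕ} (hm : m' ≤ m) (hn : n ≤ n') :
    M.segCost q0 w m n ≤ M.segCost q0 w m' n' :=
  Finset.card_le_card (Finset.filter_subset_filter _ (Finset.Ico_subset_Ico hm hn))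

lemma segCost_add {m k n : ℕ} (hmk : m ≤ k) (hkn : k ≤ n) :
    M.segCost q0 w m k + M.segCost q0 w k n = M.segCost q0 w m n := by
  rw [segCost, segCost, segCost, ← Finset.card_union_of_disjoint
    (Finset.disjoint_filter_filter (Finset.Ico_disjoint_Ico_consecutive m k n)),
    ← Finset.filter_union, Finset.Ico_union_Ico_eq_Ico hmk hkn]

lemma segCost_eq_sum {φ : ℕ → ℕ} (hφ : Monotone φ) {a b : ℕ} (hab : a ≤ b) :
    M.segCost q0 w (φ a) (φ b) = ∑ k ∈ Finset.Ico a b, M.segCost q0 w (φ k) (φ (k + 1)) := by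
  induction b, hab using Nat.le_induction with
  | base => simp [segCost]
  | succ b hab ih =>
    rw [Finset.sum_Ico_succ_top hab, ← ih, segCost_add M q0 w (hφ hab) (hφ b.le_succ)]

lemma Cor_le_segCost {n n' : ℕ} (hodd : ¬Even (M.Ω (M.stateAt q0 w n))) (hnn' : n < n')
    (heven : Even (M.Ω (M.stateAt q0 w n')))
    (hlt : M.Ω (M.stateAt q0 w n) < M.Ω (M.stateAt q0 w n')) :
    M.Cor q0 w n ≤ M.segCost q0 w n n' := by
  rw [Cor, if_neg hodd]
  exact sInf_le ⟨n', hnn', ⟨⟨_, rfl⟩, hlt, heven⟩, rfl⟩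

lemma exists_answer_of_Cor_le {n C : ℕ} (hodd : ¬Even (M.Ω (M.stateAt q0 w n)))
    (h : M.Cor q0 w n ≤ C) :
    ∃ n', n < n' ∧ Even (M.Ω (M.stateAt q0 w n')) ∧
      M.Ω (M.stateAt q0 w n) < M.Ω (M.stateAt q0 w n') ∧ M.segCost q0 w n n' ≤ C := by
  rw [Cor, if_neg hodd, ← ENat.lt_add_one_iff (ENat.natCast_ne_top C), sInf_lt_iff] at h
  obtain ⟨_, ⟨n', hnn', ⟨-, hlt, heven⟩, rfl⟩, hcost⟩ := h
  refine ⟨n', hnn', heven, hlt, ?_⟩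
  exact_mod_cast (ENat.lt_add_one_iff (ENat.natCast_ne_top C)).1 hcost

lemma accepting_iff_exists_eventually_Cor_le :
    M.Accepting q0 w ↔ ∃ C : ℕ, ∀ᶠ n in atTop, M.Cor q0 w n ≤ C := by
  refine ⟨fun h => ?_, fun ⟨C, hC⟩ => (limsup_le_of_le (by isBoundedDefault) hC).trans_lt
    (ENat.natCast_lt_top C)⟩
  obtain ⟨C, hC⟩ := WithTop.ne_top_iff_exists.1 h.ne
  refine ⟨C, (eventually_lt_of_limsup_lt (hC ▸ ENat.natCast_lt_succ)).mono
    fun n hn => (ENat.lt_add_one_iff (ENat.natCast_ne_top C)).1 hn⟩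

lemma exists_block {φ : ℕ → ℕ} (hφ : StrictMono φ) (hφ0 : φ 0 = 0) (n : ℕ) :
    ∃ j, φ j ≤ n ∧ n < φ (j + 1) := by
  have hex : ∃ k, n < φ k := ⟨n + 1, n.lt_succ_self.trans_le hφ.le_apply⟩
  have hfind : Nat.find hex ≠ 0 := fun h0 => by
    have := Nat.find_spec hex
    rw [h0, hφ0] at this
    omega
  refine ⟨Nat.find hex - 1, not_lt.1 (Nat.find_min hex (by omega)), ?_⟩
  rw [Nat.sub_add_cancel (Nat.pos_of_ne_zero hfind)]
  exact Nat.find_spec hex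

lemma card_filter_pos_segCost_le {φ : ℕ → ℕ} (hφ : Monotone φ) {a b : ℕ} (hab : a ≤ b) :
    ((Finset.Ico a b).filter fun k => 0 < M.segCost q0 w (φ k) (φ (k + 1))).card ≤
      M.segCost q0 w (φ a) (φ b) := by
  rw [segCost_eq_sum M q0 w hφ hab, Finset.card_eq_sum_ones, Finset.sum_filter]
  exact Finset.sum_le_sum fun k _ => by split_ifs <;> omega

lemma segCost_le_card_filter_pos_mul {φ : ℕ → ℕ} (hφ : Monotone φ) {d : ℕ}
    (hd : ∀ j, φ (j + 1) - φ j ≤ d) {a b : ℕ} (hab : a ≤ b) :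
    M.segCost q0 w (φ a) (φ b) ≤
      ((Finset.Ico a b).filter fun k => 0 < M.segCost q0 w (φ k) (φ (k + 1))).card * d := by
  simp_rw [segCost_eq_sum M q0 w hφ hab, ← smul_eq_mul, Nat.pos_iff_ne_zero,
    ← Finset.sum_filter_ne_zero (Finset.Ico a b)]
  exact Finset.sum_le_card_nsmul _ _ _ fun k _ => (segCost_le_sub M q0 w _ _).trans (hd k)

def BoundedResponse (t : ℕ → RType Q) : Prop :=
  let c₀ j := (t j).2.2.1
  let c₁ j := (t j).2.2.2.1
  let ℓ j := (t j).2.2.2.2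
  ∃ B : ℕ, ∀ᶠ j in atTop, c₁ j = ⊥ ∨
    ∃ j' > j, c₁ j < c₀ j' ∧ ((Finset.Ioo j j').filter fun k => ℓ k).card ≤ B

lemma boundedResponse_of_eventually_Cor_le {φ : ℕ → ℕ} (hφ : StrictMono φ) (hφ0 : φ 0 = 0)
    {C : ℕ} (hC : ∀ᶠ n in atTop, M.Cor q0 w n ≤ C) :
    BoundedResponse fun j => M.infixType q0 w (φ j) (φ (j + 1)) := by
  obtain ⟨N, hN⟩ := eventually_atTop.1 hC
  refine ⟨C, eventually_atTop.2 ⟨N, fun j hj => ?_⟩⟩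
  simp only [infixType, decide_eq_true_eq]
  rcases eq_or_ne (M.maxPendingColor q0 w (φ j) (φ (j + 1))) ⊥ with hbot | hbot
  · exact Or.inl hbot
  obtain ⟨p, hjp, hpj, hodd, hunans, hp⟩ := exists_eq_maxPendingColor M q0 w hbot
  obtain ⟨n', hpn', heven, hlt, hcost⟩ := exists_answer_of_Cor_le M q0 w
    (Nat.not_even_iff_odd.2 hodd) (hN p (hj.trans (hφ.le_apply.trans hjp)))
  have hjn' : φ (j + 1) < n' := by
    by_contra! hle
    exact hunans n' hpn' hle ⟨heven, hlt⟩
  obtain ⟨j', hj'n', hn'j'⟩ := exists_block hφ hφ0 n'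
  have hjj' : j < j' := by
    have := hφ.lt_iff_lt.1 (hjn'.trans hn'j')
    omega
  refine Or.inr ⟨j', hjj', ?_, ?_⟩
  · rw [← hp]
    exact (coe_lt_maxEvenColor_iff M q0 w).2 ⟨n', hj'n', hn'j'.le, heven, hlt⟩
  · calc ((Finset.Ioo j j').filter fun k => 0 < M.segCost q0 w (φ k) (φ (k + 1))).card
        ≤ M.segCost q0 w (φ (j + 1)) (φ j') := by
          rw [← Finset.Ico_add_one_left_eq_Ioo]
          exact card_filter_pos_segCost_le M q0 w hφ.monotone hjj'
      _ ≤ M.segCost q0 w p n' := segCost_mono M q0 w hpj hj'n'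
      _ ≤ C := hcost

lemma Cor_le_of_coe_lt_maxEvenColor {n m m' n' : ℕ} (hodd : ¬Even (M.Ω (M.stateAt q0 w n)))
    (hmn : m ≤ n) (hnm' : n < m') (hlt : (M.Ω (M.stateAt q0 w n) : WithBot ℕ) <
      M.maxEvenColor q0 w m' n') :
    M.Cor q0 w n ≤ M.segCost q0 w m n' := by
  obtain ⟨p, hm'p, hpn', heven, hlt⟩ := (coe_lt_maxEvenColor_iff M q0 w).1 hlt
  exact (Cor_le_segCost M q0 w hodd (hnm'.trans_le hm'p) heven hlt).trans
    (by exact_mod_cast segCost_mono M q0 w hmn hpn')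

lemma eventually_Cor_le_of_boundedResponse {φ : ℕ → ℕ} (hφ : StrictMono φ) (hφ0 : φ 0 = 0)
    {d : ℕ} (hd : ∀ j, φ (j + 1) - φ j ≤ d)
    (h : BoundedResponse fun j => M.infixType q0 w (φ j) (φ (j + 1))) :
    ∃ C : ℕ, ∀ᶠ n in atTop, M.Cor q0 w n ≤ C := by
  obtain ⟨B, hB⟩ := h
  obtain ⟨J, hJ⟩ := eventually_atTop.1 hB
  refine ⟨(B + 2) * d, eventually_atTop.2 ⟨φ J, fun n hn => ?_⟩⟩
  obtain ⟨j, hjn, hnj⟩ := exists_block hφ hφ0 n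
  have hJj : J ≤ j := by
    have := hφ.lt_iff_lt.1 (hn.trans_lt hnj)
    omega
  by_cases hodd : Even (M.Ω (M.stateAt q0 w n))
  · simp [Cor, hodd]
  by_cases hpending : M.Unanswered q0 w (φ (j + 1)) n
  · have hle := le_maxPendingColor M q0 w hjn hnj.le (Nat.not_even_iff_odd.1 hodd) hpending
    simp only [infixType, decide_eq_true_eq] at hJ
    rcases hJ j hJj with hbot | ⟨j', hjj', hlt, hcard⟩
    · simp [hbot] at hle
    refine (Cor_le_of_coe_lt_maxEvenColor M q0 w hodd hjn (hnj.trans_le (hφ.monotone hjj'))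
      (hle.trans_lt hlt)).trans ?_
    have hmid := (segCost_le_card_filter_pos_mul M q0 w hφ.monotone hd (a := j + 1) hjj').trans
      (Nat.mul_le_mul_right d (Finset.Ico_add_one_left_eq_Ioo j j' ▸ hcard))
    have hfirst := (segCost_le_sub M q0 w _ _).trans (hd j)
    have hlast := (segCost_le_sub M q0 w _ _).trans (hd j')
    rw [← segCost_add M q0 w (hφ.monotone j.le_succ) (hφ.monotone (Nat.le_succ_of_le hjj')),
      ← segCost_add M q0 w (hφ.monotone hjj') (hφ.monotone j'.le_succ)]
    norm_cast
    linarith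
  · simp only [Unanswered, not_forall, not_not] at hpending
    obtain ⟨p, hnp, hpj, heven, hlt⟩ := hpending
    refine (Cor_le_segCost M q0 w hodd hnp heven hlt).trans ?_
    have hcost := (segCost_le_sub M q0 w n p).trans ((tsub_le_tsub hpj hjn).trans (hd j))
    exact_mod_cast hcost.trans (Nat.le_mul_of_pos_left d (by omega))

theorem accepting_iff_boundedResponse {φ : ℕ → ℕ} (hφ : StrictMono φ) (hφ0 : φ 0 = 0) {d : ℕ}
    (hd : ∀ j, φ (j + 1) - φ j ≤ d) :
    M.Accepting q0 w ↔
      BoundedResponse fun j => M.runType (M.stateAt q0 w (φ j)) (seg w (φ j) (φ (j + 1))) := by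
  rw [funext fun j => runType_seg M q0 w (hφ j.lt_succ_self).le,
    accepting_iff_exists_eventually_Cor_le]
  exact ⟨fun ⟨_, hC⟩ => boundedResponse_of_eventually_Cor_le M q0 w hφ hφ0 hC,
    eventually_Cor_le_of_boundedResponse M q0 w hφ hφ0 hd⟩

end PACost

theorem statement1_general {Q A : Type} (M : PACost Q A)
    (q1 q2 : Q) (w1 w2 : ℕ → A) (φ1 φ2 : ℕ → ℕ)
    (hmono1 : StrictMono φ1) (hmono2 : StrictMono φ2)
    (h01 : φ1 0 = 0) (h02 : φ2 0 = 0)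
    (htype : ∀ j, M.runType (M.stateAt q1 w1 (φ1 j)) (seg w1 (φ1 j) (φ1 (j + 1)))
               = M.runType (M.stateAt q2 w2 (φ2 j)) (seg w2 (φ2 j) (φ2 (j + 1))))
    (hb1 : ∃ d1 : ℕ, ∀ j, φ1 (j + 1) - φ1 j ≤ d1)
    (hb2 : ∃ d2 : ℕ, ∀ j, φ2 (j + 1) - φ2 j ≤ d2) :
    M.Accepting q1 w1 ↔ M.Accepting q2 w2 := by
  obtain ⟨d1, hd1⟩ := hb1
  obtain ⟨d2, hd2⟩ := hb2
  rw [M.accepting_iff_boundedResponse q1 w1 hmono1 h01 hd1,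
    M.accepting_iff_boundedResponse q2 w2 hmono2 h02 hd2, funext htype]

/-- run replacement, bounded on both sides. If corresponding pieces of the
two decomposed infinite runs have the same type and the lengths of the pieces are bounded on
both sides, then one concatenated run is accepting iff the other one is. -/
theorem statement1 {Q A : Type} [Fintype Q] [Fintype A] (M : PACost Q A)
    (q1 q2 : Q) (w1 w2 : ℕ → A) (φ1 φ2 : ℕ → ℕ)
    (hmono1 : StrictMono φ1) (hmono2 : StrictMono φ2)
    (h01 : φ1 0 = 0) (h02 : φ2 0 = 0)
    (htype : ∀ j, M.runType (M.stateAt q1 w1 (φ1 j)) (seg w1 (φ1 j) (φ1 (j + 1)))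
               = M.runType (M.stateAt q2 w2 (φ2 j)) (seg w2 (φ2 j) (φ2 (j + 1))))
    (hb1 : ∃ d1 : ℕ, ∀ j, φ1 (j + 1) - φ1 j ≤ d1)
    (hb2 : ∃ d2 : ℕ, ∀ j, φ2 (j + 1) - φ2 j ≤ d2) :
    M.Accepting q1 w1 ↔ M.Accepting q2 w2 :=
  statement1_general M q1 q2 w1 w2 φ1 φ2 hmono1 hmono2 h01 h02 htype hb1 hb2
end
end

section
/- For every n > 0 there exists a finitary Büchi automaton A_n over the alphabet Σ_I × Σ_O with Σ_I = Σ_O = {0,1} and with n + 2 states such that: (i) Player O wins Γ_{f_0}(L(A_n)) and an optimal winning strategy for Player O in Γ_{f_0}(L(A_n)) has cost n; and (ii) Player O wins Γ_{f_1}(L(A_n)) and an optimal winning strategy for Player O in Γ_{f_1}(L(A_n)) has cost 1. -/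
attribute [local instance] Classical.propDecidable

noncomputable section

section DelayGames

variable {I O : Type}

/-- The `n`-th letter of the concatenation `u 0 ++ u 1 ++ u 2 ++ ⋯`
(well-defined whenever all blocks are non-empty). -/
def flatWord [Inhabited I] (u : ℕ → List I) (n : ℕ) : I :=
  (((List.range (n + 1)).map u).flatten).getD n default

/-- A delay function maps every round to a positive number of letters. -/
def DelayFn (f : ℕ → ℕ) : Prop := ∀ i, 0 < f i

/-- The constant delay function `f_k` with `f_k 0 = k + 1` and `f_k i = 1` for `i > 0`. -/
def constDF (k : ℕ) : ℕ → ℕ := fun i => if i = 0 then k + 1 else 1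

/-- The sequence of letters Player I has produced up to (and including) round `i`. -/
def oHist (u : ℕ → List I) (i : ℕ) : List I := ((List.range (i + 1)).map u).flatten

/-- `τO` is a winning strategy for Player O in the delay game with delay function `f`
and winning condition `L`. -/
def OWinning [Inhabited I] (f : ℕ → ℕ) (L : Set (ℕ → I × O)) (τO : List I → O) : Prop :=
  ∀ u : ℕ → List I, ∀ v : ℕ → O,
    (∀ i, (u i).length = f i) →
    (∀ i, v i = τO (oHist u i)) →
    (fun n => (flatWord u n, v n)) ∈ L

/-- Player O wins the delay game `Γ_f(L)`. -/
def OWins [Inhabited I] (f : ℕ → ℕ) (L : Set (ℕ → I × O)) : Prop :=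
  ∃ τO : List I → O, OWinning f L τO

/-- `τI` is a winning strategy for Player I in the delay game with delay function `f`
and winning condition `L`. -/
def IWinning [Inhabited I] (f : ℕ → ℕ) (L : Set (ℕ → I × O)) (τI : List O → List I) : Prop :=
  (∀ w, (τI w).length = f w.length) ∧
  ∀ u : ℕ → List I, ∀ v : ℕ → O,
    (∀ i, u i = τI ((List.range i).map v)) →
    (fun n => (flatWord u n, v n)) ∉ L

/-- Player I wins the delay game `Γ_f(L)`. -/
def IWins [Inhabited I] (f : ℕ → ℕ) (L : Set (ℕ → I × O)) : Prop :=
  ∃ τI : List O → List I, IWinning f L τI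

/-- The cost of a strategy `τO` of Player O: the supremum of the word-costs `wc` of the
outcomes of plays consistent with `τO`. -/
def stratCost [Inhabited I] (wc : (ℕ → I × O) → ℕ∞) (f : ℕ → ℕ) (τO : List I → O) : ℕ∞ :=
  ⨆ (u : ℕ → List I) (v : ℕ → O)
    (_ : (∀ i, (u i).length = f i) ∧ ∀ i, v i = τO (oHist u i)),
    wc (fun n => (flatWord u n, v n))

/-- An optimal winning strategy for Player O in `Γ_f(L)` exists and has cost `c`. -/
def OptimalCostIs [Inhabited I] (L : Set (ℕ → I × O)) (wc : (ℕ → I × O) → ℕ∞)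
    (f : ℕ → ℕ) (c : ℕ∞) : Prop :=
  (∃ τO, OWinning f L τO ∧ stratCost wc f τO = c) ∧
  ∀ τO, OWinning f L τO → c ≤ stratCost wc f τO

end DelayGames

/-- The cost `limsup_n Cor(ρ(w), n)` of the run of `M` on an infinite word `w`. -/
def PACost.wCost {Q I O : Type} (M : PACost Q (I × O)) : (ℕ → I × O) → ℕ∞ :=
  fun w => Filter.limsup (fun n => PACost.Cor M M.qI w n) Filter.atTop


/-!
From its only Büchi state, the automaton stores Player O's output bit as a prediction of the next
input bit. A correct prediction leads back to the Büchi state after two steps, a wrong one only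
after `n + 1` steps. Hence every run returns to the Büchi state within `n` steps from any
position, every word is accepted, and the Büchi state is never visited twice in a row, so every
word has cost between `1` and `n`. With one letter of lookahead Player O sees the bit it has to
predict (cost `1`); without lookahead Player I falsifies every prediction (cost `n`).
-/

theorem exists_add_le_of_potential_lt {α : Type*} {s : ℕ → α} {p : α → Prop} (d : α → ℕ)
    (hd : ∀ m, ¬ p (s m) → d (s (m + 1)) < d (s m)) (m : ℕ) :
    ∃ j ≤ d (s m), p (s (m + j)) := by
  induction hk : d (s m) using Nat.strong_induction_on generalizing m with
  | _ k ih =>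
    by_cases hp : p (s m)
    · exact ⟨0, Nat.zero_le _, hp⟩
    · have hlt : d (s (m + 1)) < k := hk ▸ hd m hp
      obtain ⟨j, hj, hpj⟩ := ih _ hlt (m + 1) rfl
      exact ⟨j + 1, by omega, by rwa [add_comm j 1, ← add_assoc]⟩

namespace PACost

variable {Q A : Type} {M : PACost Q A} {q0 : Q} {w : ℕ → A}

theorem FinBuchi.segCost_eq (hM : M.FinBuchi) (m n : ℕ) : M.segCost q0 w m n = n - m := by
  simp [segCost, hM.1]

theorem FinBuchi.cor_le (hM : M.FinBuchi) {m j : ℕ}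
    (hj : M.Ω (M.stateAt q0 w (m + j)) = 2) : M.Cor q0 w m ≤ j := by
  unfold Cor
  split_ifs with heven
  · exact zero_le
  · have h1 : M.Ω (M.stateAt q0 w m) = 1 :=
      (hM.2 _).resolve_right fun h => heven (h ▸ even_two)
    have hj0 : j ≠ 0 := by rintro rfl; exact heven (hj ▸ even_two)
    refine sInf_le ⟨m + j, by omega, ?_, by rw [hM.segCost_eq]; simp⟩
    rw [h1, hj]
    exact ⟨⟨_, hj⟩, one_lt_two, even_two⟩

theorem FinBuchi.le_cor (hM : M.FinBuchi) {m j : ℕ}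
    (hj : ∀ i < j, M.Ω (M.stateAt q0 w (m + i)) ≠ 2) : (j : ℕ∞) ≤ M.Cor q0 w m := by
  rcases Nat.eq_zero_or_pos j with rfl | hj0
  · simp
  have h1 : M.Ω (M.stateAt q0 w m) = 1 := (hM.2 _).resolve_right (by simpa using hj 0 hj0)
  rw [Cor, if_neg (by rw [h1]; decide)]
  refine le_sInf ?_
  rintro _ ⟨n', hmn, ⟨_, -, heven⟩, rfl⟩
  have h2 : M.Ω (M.stateAt q0 w n') = 2 :=
    (hM.2 _).resolve_left fun h => Nat.not_even_one (h ▸ heven)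
  rw [hM.segCost_eq, Nat.cast_le]
  by_contra! hlt
  exact hj (n' - m) (by omega) (by rwa [Nat.add_sub_cancel' hmn.le])

variable {I O : Type} {M : PACost Q (I × O)} {w : ℕ → I × O}

theorem FinBuchi.wCost_le (hM : M.FinBuchi) {c : ℕ}
    (h : ∀ m, ∃ j ≤ c, M.Ω (M.stateAt M.qI w (m + j)) = 2) : M.wCost w ≤ c :=
  Filter.limsup_le_of_le (h := Filter.Eventually.of_forall fun m =>
    let ⟨_, hj, h2⟩ := h m
    (hM.cor_le h2).trans (Nat.cast_le.2 hj))

theorem FinBuchi.le_wCost (hM : M.FinBuchi) {c : ℕ}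
    (h : ∀ N, ∃ m ≥ N, ∀ i < c, M.Ω (M.stateAt M.qI w (m + i)) ≠ 2) : c ≤ M.wCost w :=
  Filter.le_limsup_of_frequently_le (Filter.frequently_atTop.2 fun N =>
    let ⟨m, hm, h2⟩ := h N
    ⟨m, hm, hM.le_cor h2⟩)

end PACost

section DelayGames

variable {I O : Type}

theorem oHist_zero (u : ℕ → List I) : oHist u 0 = u 0 := by
  simp [oHist]

theorem oHist_succ (u : ℕ → List I) (i : ℕ) : oHist u (i + 1) = oHist u i ++ u (i + 1) := by
  simp [oHist, List.range_succ]

theorem length_oHist_of_constDF {k : ℕ} {u : ℕ → List I} (hu : ∀ i, (u i).length = constDF k i)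
    (i : ℕ) : (oHist u i).length = k + 1 + i := by
  induction i with
  | zero => simpa [oHist_zero, constDF] using hu 0
  | succ i ih => simp [oHist_succ, ih, hu, constDF, add_assoc]

variable [Inhabited I] {wc : (ℕ → I × O) → ℕ∞} {f : ℕ → ℕ} {τO : List I → O}

theorem flatWord_eq_getD (u : ℕ → List I) (n : ℕ) :
    flatWord u n = (oHist u n).getD n default := rfl

theorem le_stratCost {u : ℕ → List I} {v : ℕ → O} (hu : ∀ i, (u i).length = f i)
    (hv : ∀ i, v i = τO (oHist u i)) : wc (fun n => (flatWord u n, v n)) ≤ stratCost wc f τO :=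
  le_iSup₂_of_le u v (le_iSup_of_le ⟨hu, hv⟩ le_rfl)

theorem stratCost_le {c : ℕ∞}
    (h : ∀ (u : ℕ → List I) (v : ℕ → O), (∀ i, (u i).length = f i) →
      (∀ i, v i = τO (oHist u i)) → wc (fun n => (flatWord u n, v n)) ≤ c) :
    stratCost wc f τO ≤ c :=
  iSup₂_le fun u v => iSup_le fun huv => h u v huv.1 huv.2

theorem le_stratCost_of_forall_le {c : ℕ∞} (h : ∀ w, c ≤ wc w) : c ≤ stratCost wc f τO :=
  (h _).trans (le_stratCost (u := fun i => List.replicate (f i) default)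
    (fun _ => List.length_replicate) fun _ => rfl)

theorem OptimalCostIs.of_le {L : Set (ℕ → I × O)} {c : ℕ∞} (hτO : OWinning f L τO)
    (hle : stratCost wc f τO ≤ c) (hge : ∀ τ, OWinning f L τ → c ≤ stratCost wc f τ) :
    OptimalCostIs L wc f c :=
  ⟨⟨τO, hτO, le_antisymm hle (hge τO hτO)⟩, hge⟩

end DelayGames

/-- Transitions of `predAut n` on state indices. From `0` the output bit `b` is stored as the
prediction state `n + 1` (for `true`) or `n`; a correct prediction of the next input bit `a`
leads back to `0`, a wrong one to `n - 1`, from where the chain `n - 1, …, 1` counts down to `0`. -/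
def predNext (n q : ℕ) (a b : Bool) : ℕ :=
  if q = 0 then (if b then n + 1 else n)
  else if q < n then q - 1
  else if q = n then (if a then n - 1 else 0)
  else (if a then 0 else n - 1)

theorem predNext_lt (n q : ℕ) (a b : Bool) : predNext n q a b < n + 2 := by
  unfold predNext
  split_ifs <;> omega

def predAut (n : ℕ) : PACost (Fin (n + 2)) (Bool × Bool) where
  qI := 0
  δ q l := ⟨predNext n q l.1 l.2, predNext_lt n q l.1 l.2⟩
  Ω q := if q.val = 0 then 2 else 1
  Cst _ _ := true

theorem predAut_Ω {n : ℕ} (q : Fin (n + 2)) : (predAut n).Ω q = if q.val = 0 then 2 else 1 :=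
  rfl

theorem predAut_finBuchi (n : ℕ) : (predAut n).FinBuchi :=
  ⟨fun _ _ => rfl, fun q => by rw [predAut_Ω]; split_ifs <;> simp⟩

theorem predAut_Ω_eq_two_iff {n : ℕ} {q : Fin (n + 2)} : (predAut n).Ω q = 2 ↔ q.val = 0 := by
  rw [predAut_Ω]
  split_ifs with h <;> simp [h]

def predRun (n : ℕ) (w : ℕ → Bool × Bool) (m : ℕ) : ℕ :=
  ((predAut n).stateAt (predAut n).qI w m).val

namespace predRun

variable {n : ℕ} {w : ℕ → Bool × Bool} {m : ℕ}

theorem zero : predRun n w 0 = 0 := by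
  simp [predRun, PACost.stateAt, predAut]

theorem succ (m : ℕ) : predRun n w (m + 1) = predNext n (predRun n w m) (w m).1 (w m).2 := rfl

theorem succ_of_eq_zero (h : predRun n w m = 0) :
    predRun n w (m + 1) = if (w m).2 then n + 1 else n := by
  rw [succ, h, predNext, if_pos rfl]

theorem add_two_of_eq_zero (hn : 0 < n) (h : predRun n w m = 0) :
    predRun n w (m + 2) = if (w (m + 1)).1 = (w m).2 then 0 else n - 1 := by
  rw [succ, succ_of_eq_zero h]
  cases (w m).2 <;> cases (w (m + 1)).1 <;> simp [predNext] <;> omega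

theorem add_of_lt (h : predRun n w m < n) {i : ℕ} (hi : i ≤ predRun n w m) :
    predRun n w (m + i) = predRun n w m - i := by
  induction i with
  | zero => rfl
  | succ i ih =>
    rw [← add_assoc, succ, ih (by omega), predNext, if_neg (by omega), if_pos (by omega)]
    omega

theorem exists_add_eq_zero (hn : 0 < n) (m : ℕ) : ∃ j ≤ n, predRun n w (m + j) = 0 := by
  have hd : ∀ m, predRun n w m ≠ 0 →
      min (predRun n w (m + 1)) n < min (predRun n w m) n := by
    intro m h0
    rw [succ, predNext, if_neg h0]
    split_ifs <;> omega
  obtain ⟨j, hj, h0⟩ :=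
    exists_add_le_of_potential_lt (s := predRun n w) (p := (· = 0)) (fun q => min q n) hd m
  exact ⟨j, hj.trans (min_le_right _ _), h0⟩

theorem of_wrong (hn : 0 < n) (h0 : predRun n w m = 0) (hw : (w (m + 1)).1 ≠ (w m).2) :
    (∀ i < n, predRun n w (m + 1 + i) ≠ 0) ∧ predRun n w (m + 1 + n) = 0 := by
  have h1 : predRun n w (m + 1) ≠ 0 := by rw [succ_of_eq_zero h0]; split_ifs <;> omega
  have h2 : predRun n w (m + 2) = n - 1 := by rw [add_two_of_eq_zero hn h0, if_neg hw]
  have chain : ∀ i ≤ n - 1, predRun n w (m + 2 + i) = n - 1 - i := fun i hi =>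
    h2 ▸ add_of_lt (by omega) (by omega)
  refine ⟨fun i hi => ?_, ?_⟩
  · rcases Nat.eq_zero_or_pos i with rfl | hi0
    · exact h1
    · have := chain (i - 1) (by omega)
      rw [show m + 2 + (i - 1) = m + 1 + i by omega] at this
      omega
  · have := chain (n - 1) le_rfl
    rwa [show m + 2 + (n - 1) = m + 1 + n by omega, Nat.sub_self] at this

end predRun

section Costs

variable {n : ℕ} {w : ℕ → Bool × Bool}

theorem predAut_wCost_le (hn : 0 < n) (w : ℕ → Bool × Bool) : (predAut n).wCost w ≤ n :=
  (predAut_finBuchi n).wCost_le fun m =>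
    (predRun.exists_add_eq_zero hn m).imp fun _ ⟨hj, h0⟩ => ⟨hj, predAut_Ω_eq_two_iff.2 h0⟩

theorem predAut_oWinning (hn : 0 < n) (f : ℕ → ℕ) (τO : List Bool → Bool) :
    OWinning f (predAut n).Lang τO :=
  fun _ _ _ _ => (predAut_wCost_le hn _).trans_lt (ENat.natCast_lt_top n)

theorem one_le_predAut_wCost (hn : 0 < n) (w : ℕ → Bool × Bool) : 1 ≤ (predAut n).wCost w := by
  have h : ∀ N, ∃ m ≥ N, predRun n w m ≠ 0 := fun N => by
    by_cases h0 : predRun n w N = 0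
    · exact ⟨N + 1, N.le_succ, by rw [predRun.succ_of_eq_zero h0]; split_ifs <;> omega⟩
    · exact ⟨N, le_rfl, h0⟩
  refine Nat.cast_one (R := ℕ∞) ▸ (predAut_finBuchi n).le_wCost fun N => ?_
  obtain ⟨m, hm, h0⟩ := h N
  refine ⟨m, hm, fun i hi => ?_⟩
  rw [Nat.lt_one_iff.1 hi, add_zero, Ne, predAut_Ω_eq_two_iff]
  exact h0

theorem predAut_wCost_le_one (hn : 0 < n) (hw : ∀ m, (w (m + 1)).1 = (w m).2) :
    (predAut n).wCost w ≤ 1 := by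
  have heven : ∀ t, predRun n w (2 * t) = 0 := by
    intro t
    induction t with
    | zero => exact predRun.zero
    | succ t ih => rw [mul_add, predRun.add_two_of_eq_zero hn ih, if_pos (hw _)]
  exact_mod_cast (predAut_finBuchi n).wCost_le (c := 1) fun m => by
    obtain ⟨t, rfl | rfl⟩ := Nat.even_or_odd' m
    · exact ⟨0, zero_le_one, predAut_Ω_eq_two_iff.2 (heven t)⟩
    · refine ⟨1, le_rfl, predAut_Ω_eq_two_iff.2 ?_⟩
      rw [show 2 * t + 1 + 1 = 2 * (t + 1) by ring]
      exact heven (t + 1)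

theorem le_predAut_wCost (hn : 0 < n) (hw : ∀ m, (w (m + 1)).1 ≠ (w m).2) :
    (n : ℕ∞) ≤ (predAut n).wCost w := by
  have hblock : ∀ t, predRun n w (t * (n + 1)) = 0 := by
    intro t
    induction t with
    | zero => rw [zero_mul]; exact predRun.zero
    | succ t ih =>
      rw [show (t + 1) * (n + 1) = t * (n + 1) + 1 + n by ring]
      exact (predRun.of_wrong hn ih (hw _)).2
  refine (predAut_finBuchi n).le_wCost fun N => ⟨N * (n + 1) + 1, by nlinarith, fun i hi => ?_⟩
  rw [Ne, predAut_Ω_eq_two_iff]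
  exact (predRun.of_wrong hn (hblock N) (hw _)).1 i hi

end Costs

def copyLast (h : List Bool) : Bool := h.getD (h.length - 1) default

theorem flatWord_succ_eq_copyLast {u : ℕ → List Bool} (hu : ∀ i, (u i).length = constDF 1 i)
    (i : ℕ) : flatWord u (i + 1) = copyLast (oHist u i) := by
  have hlen := length_oHist_of_constDF hu i
  rw [flatWord_eq_getD, oHist_succ, List.getD_append _ _ _ _ (by omega), copyLast, hlen]
  congr 1
  omega

theorem stratCost_copyLast_le {n : ℕ} (hn : 0 < n) :
    stratCost (predAut n).wCost (constDF 1) copyLast ≤ 1 :=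
  stratCost_le fun _ _ hu hv =>
    predAut_wCost_le_one hn fun m => by
      show flatWord _ (m + 1) = _
      rw [hv m, flatWord_succ_eq_copyLast hu]

-- The input produced up to round `i` when each letter of Player I negates Player O's answer
-- in the previous round.
def adversaryHist (τO : List Bool → Bool) : ℕ → List Bool
  | 0 => [default]
  | i + 1 => adversaryHist τO i ++ [!τO (adversaryHist τO i)]

def adversary (τO : List Bool → Bool) : ℕ → List Bool
  | 0 => [default]
  | i + 1 => [!τO (adversaryHist τO i)]

section Adversary

variable (τO : List Bool → Bool)

theorem length_adversary (i : ℕ) : (adversary τO i).length = constDF 0 i := by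
  cases i <;> rfl

theorem length_adversaryHist (i : ℕ) : (adversaryHist τO i).length = i + 1 := by
  induction i with
  | zero => rfl
  | succ i ih => simp [adversaryHist, ih]

theorem oHist_adversary (i : ℕ) : oHist (adversary τO) i = adversaryHist τO i := by
  induction i with
  | zero => rw [oHist_zero]; rfl
  | succ i ih => rw [oHist_succ, ih]; rfl

theorem flatWord_adversary_succ (i : ℕ) :
    flatWord (adversary τO) (i + 1) = !τO (adversaryHist τO i) := by
  rw [flatWord_eq_getD, oHist_adversary, adversaryHist,
    List.getD_append_right _ _ _ _ (length_adversaryHist τO i).le, length_adversaryHist]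
  simp

theorem le_stratCost_constDF_zero {n : ℕ} (hn : 0 < n) :
    (n : ℕ∞) ≤ stratCost (predAut n).wCost (constDF 0) τO :=
  (le_predAut_wCost hn fun m => by simp [flatWord_adversary_succ]).trans
    (le_stratCost (v := fun i => τO (adversaryHist τO i)) (length_adversary τO)
      fun i => by rw [oHist_adversary])

end Adversary

/-- Theorem 6, trading one move of lookahead for cost. For every `n > 0`
there is a finitary Büchi automaton over `{0,1}²` with `n + 2` states such that the optimal
winning strategy of Player O in the delay-free game has cost `n`, while with lookahead `1`
it has cost `1`. -/
theorem statement12 (n : ℕ) (hn : 0 < n) :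
    ∃ M : PACost (Fin (n + 2)) (Bool × Bool),
      M.FinBuchi ∧
      (OWins (constDF 0) M.Lang ∧ OptimalCostIs M.Lang M.wCost (constDF 0) (n : ℕ∞)) ∧
      (OWins (constDF 1) M.Lang ∧ OptimalCostIs M.Lang M.wCost (constDF 1) 1) := by
  have win := predAut_oWinning hn
  refine ⟨predAut n, predAut_finBuchi n, ⟨⟨_, win _ fun _ => default⟩, ?_⟩,
    ⟨⟨copyLast, win _ copyLast⟩, ?_⟩⟩
  · exact .of_le (win _ fun _ => default) (stratCost_le fun _ _ _ _ => predAut_wCost_le hn _)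
      fun τO _ => le_stratCost_constDF_zero τO hn
  · exact .of_le (win _ copyLast) (stratCost_copyLast_le hn)
      fun _ _ => le_stratCost_of_forall_le (one_le_predAut_wCost hn)
end
end
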